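/- Under the hypotheses of the Recursion Rule setup (associative algebra B over R, unit A ∈ R, central cancellable η ∈ B, families X and D with X_v·X_w = A^{|det(v,w)|}X_{v+w} + A^{−|det(v,w)|}X_{v−w} + η·D(v,w)), assume additionally D(v,w) = 0 whenever |det(v,w)| ≤ 1, and X_{−v} = X_v for all v. Then specializing the Recursion Rule with u = (1,0), v = (p, q), w = (0,1) yields: A^{q}·D((p+1,q),(0,1)) = X_{(1,0)}·D((p,q),(0,1)) − A^{−q}·D((p−1,q),(0,1)) + A^{−p}·D((1,0),(p,q−1)) − D((1,0),(p,q))·X_{(0,1)} + A^{p}·D((1,0),(p,q+1)), for all integers p ≥ 1 and q ≥ 1. -/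

import Mathlib

/-!
Both ways of bracketing `X(1,0) · X(p,q) · X(0,1)` can be expanded twice with the product rule,
since all determinants involved (`p`, `q`, `p ± 1`, `q ± 1`) are nonnegative. The `X`-terms of the
two expansions coincide, coefficient by coefficient, so associativity leaves an identity between
the `η`-terms, and cancelling `η` gives the recursion.
-/

/-- The determinant pairing `det((p,q),(r,s)) = p·s − r·q` on `ℤ²`. -/
def dett (v w : ℤ × ℤ) : ℤ := v.1 * w.2 - w.1 * v.2

section ProductRule

variable {R B : Type*} [CommRing R] [Ring B] [Algebra R B]
  {A : Rˣ} {η : B} {X : ℤ × ℤ → B} {D : ℤ × ℤ → ℤ × ℤ → B}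

theorem mul_eq_of_dett_eq_of_nonneg
    (hstr : ∀ v w : ℤ × ℤ,
      X v * X w = ((A ^ |dett v w| : Rˣ) : R) • X (v + w) +
        ((A ^ (-|dett v w|) : Rˣ) : R) • X (v - w) + η * D v w)
    {v w : ℤ × ℤ} {m : ℤ} (hvw : dett v w = m) (hm : 0 ≤ m) :
    X v * X w = ((A ^ m : Rˣ) : R) • X (v + w) +
      ((A ^ (-m) : Rˣ) : R) • X (v - w) + η * D v w := by
  rw [hstr, hvw, abs_of_nonneg hm]

theorem mul_X_zero_one
    (hstr : ∀ v w : ℤ × ℤ,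
      X v * X w = ((A ^ |dett v w| : Rˣ) : R) • X (v + w) +
        ((A ^ (-|dett v w|) : Rˣ) : R) • X (v - w) + η * D v w)
    {p : ℤ} (q : ℤ) (hp : 0 ≤ p) :
    X (p, q) * X (0, 1) = ((A ^ p : Rˣ) : R) • X (p, q + 1) +
      ((A ^ (-p) : Rˣ) : R) • X (p, q - 1) + η * D (p, q) (0, 1) := by
  simpa using mul_eq_of_dett_eq_of_nonneg hstr (v := (p, q)) (w := (0, 1)) (by simp [dett]) hp

theorem X_one_zero_mul
    (hstr : ∀ v w : ℤ × ℤ,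
      X v * X w = ((A ^ |dett v w| : Rˣ) : R) • X (v + w) +
        ((A ^ (-|dett v w|) : Rˣ) : R) • X (v - w) + η * D v w)
    (hsym : ∀ v : ℤ × ℤ, X (-v) = X v) (p : ℤ) {q : ℤ} (hq : 0 ≤ q) :
    X (1, 0) * X (p, q) = ((A ^ q : Rˣ) : R) • X (p + 1, q) +
      ((A ^ (-q) : Rˣ) : R) • X (p - 1, q) + η * D (1, 0) (p, q) := by
  have hsub : ((1 : ℤ), (0 : ℤ)) - (p, q) = -(p - 1, q) := by ext <;> simp
  have := mul_eq_of_dett_eq_of_nonneg hstr (v := (1, 0)) (w := (p, q)) (by simp [dett]) hq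
  rwa [hsub, hsym, Prod.mk_add_mk, zero_add, add_comm 1 p] at this

end ProductRule

theorem recursion_rule_specialized_general
    {R B : Type*} [CommRing R] [Ring B] [Algebra R B]
    (A : Rˣ) (η : B)
    (hcentral : ∀ b : B, η * b = b * η)
    (hcancel : ∀ x y : B, η * x = η * y → x = y)
    (X : ℤ × ℤ → B) (D : ℤ × ℤ → ℤ × ℤ → B)
    (hstr : ∀ v w : ℤ × ℤ,
      X v * X w = ((A ^ |dett v w| : Rˣ) : R) • X (v + w) +
        ((A ^ (-|dett v w|) : Rˣ) : R) • X (v - w) + η * D v w)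
    (hsym : ∀ v : ℤ × ℤ, X (-v) = X v)
    (p q : ℤ) (hp : 1 ≤ p) (hq : 1 ≤ q) :
    ((A ^ q : Rˣ) : R) • D (p + 1, q) (0, 1) =
      X (1, 0) * D (p, q) (0, 1) -
        ((A ^ (-q) : Rˣ) : R) • D (p - 1, q) (0, 1) +
        ((A ^ (-p) : Rˣ) : R) • D (1, 0) (p, q - 1) -
        D (1, 0) (p, q) * X (0, 1) +
        ((A ^ p : Rˣ) : R) • D (1, 0) (p, q + 1) := by
  have hη : ∀ b c : B, b * (η * c) = η * (b * c) := fun b c =>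
    Commute.left_comm (hcentral b).symm c
  have assoc := mul_assoc (X (1, 0)) (X (p, q)) (X (0, 1))
  rw [X_one_zero_mul hstr hsym p (by omega), mul_X_zero_one hstr q (by omega)] at assoc
  simp only [mul_add, add_mul, mul_smul_comm, smul_mul_assoc, hη] at assoc
  rw [mul_X_zero_one hstr q (by omega), mul_X_zero_one hstr q (by omega),
    X_one_zero_mul hstr hsym p (by omega), X_one_zero_mul hstr hsym p (by omega)] at assoc
  simp only [smul_add, smul_smul, ← Units.val_mul, ← zpow_add, mul_assoc] at assoc
  apply hcancel
  simp only [mul_add, mul_sub, mul_smul_comm]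
  linear_combination (norm := match_scalars <;> ring_nf) assoc

theorem recursion_rule_specialized
    {R B : Type*} [CommRing R] [Ring B] [Algebra R B]
    (A : Rˣ) (η : B)
    (hcentral : ∀ b : B, η * b = b * η)
    (hcancel : ∀ x y : B, η * x = η * y → x = y)
    (X : ℤ × ℤ → B) (D : ℤ × ℤ → ℤ × ℤ → B)
    (hstr : ∀ v w : ℤ × ℤ,
      X v * X w = ((A ^ |dett v w| : Rˣ) : R) • X (v + w) +
        ((A ^ (-|dett v w|) : Rˣ) : R) • X (v - w) + η * D v w)
    (hD1 : ∀ v w : ℤ × ℤ, |dett v w| ≤ 1 → D v w = 0)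
    (hsym : ∀ v : ℤ × ℤ, X (-v) = X v)
    (p q : ℤ) (hp : 1 ≤ p) (hq : 1 ≤ q) :
    ((A ^ q : Rˣ) : R) • D (p + 1, q) (0, 1) =
      X (1, 0) * D (p, q) (0, 1) -
        ((A ^ (-q) : Rˣ) : R) • D (p - 1, q) (0, 1) +
        ((A ^ (-p) : Rˣ) : R) • D (1, 0) (p, q - 1) -
        D (1, 0) (p, q) * X (0, 1) +
        ((A ^ p : Rˣ) : R) • D (1, 0) (p, q + 1) :=
  recursion_rule_specialized_general A η hcentral hcancel X D hstr hsym p q hp hq
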